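/- Let k ≥ 4 be an integer and let f(u) := (k²/2) sin(2u). For λ, μ > 0 define G_{λ,μ}(r) := f(Q_λ(r) - Q_μ(r)) - f(Q_λ(r)) + f(Q_μ(r)) - 4 (r/μ)^k ΛQ_λ(r)² - 4 (r/λ)^{-k} ΛQ_μ(r)². Then for each α ∈ {1, 2, 3} there is a constant C > 0 such that for all λ, μ > 0 with ν := λ/μ ≤ 1/2: (∫₀^∞ r^{-2α} G_{λ,μ}(r)² r dr)^{1/2} ≤ C ν^{2k} λ^{1-α}. -/

import Mathlib

open MeasureTheory Set Filter

noncomputable section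

/-- The `k`-equivariant harmonic map profile `Q(r) = 2 arctan(r^k)`. -/
def Qfun (k : ℕ) (r : ℝ) : ℝ := 2 * Real.arctan (r ^ k)

/-- `ΛQ(r) = 2k r^k / (1 + r^{2k})`. -/
def LamQ (k : ℕ) (r : ℝ) : ℝ := 2 * k * r ^ k / (1 + r ^ (2 * k))

/-- `f(u) = (k²/2) sin(2u)`. -/
def fNL (k : ℕ) (u : ℝ) : ℝ := (k : ℝ) ^ 2 / 2 * Real.sin (2 * u)

/-- `G_{λ,μ}(r) = f(Q_λ - Q_μ) - f(Q_λ) + f(Q_μ) - 4 (r/μ)^k (ΛQ_λ)² - 4 (r/λ)^{-k} (ΛQ_μ)²`. -/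
def Gfun (k : ℕ) (lam mu : ℝ) (r : ℝ) : ℝ :=
  fNL k (Qfun k (r / lam) - Qfun k (r / mu)) - fNL k (Qfun k (r / lam)) + fNL k (Qfun k (r / mu))
    - 4 * (r / mu) ^ k * LamQ k (r / lam) ^ 2
    - 4 * (r / lam) ^ (-(k : ℤ)) * LamQ k (r / mu) ^ 2

/-!
Put `x = (r/λ)^k` and `y = (r/μ)^k = ν^k x`. The double-angle formulas for `Q = 2 arctan(r^k)`
turn `G_{λ,μ}` into `-16 k² ν^{2k}` times an explicit rational function of `(x, y)`, and that
function is at most `3x/(1+x²) + 4y/(1+y²)`; hence `|G_{λ,μ}| ≤ 8k ν^{2k} (3 ΛQ_λ + 4 ΛQ_μ)`.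
The weighted norm `∫ ΛQ_c(r)² r^{-2α} r dr` is finite for `1 ≤ α ≤ k` and scales like
`c^{2-2α}`; since `λ ≤ μ` and `α ≥ 1`, the `μ`-term is dominated by the `λ`-term.
-/

open Real

theorem sin_two_mul_arctan (v : ℝ) : sin (2 * arctan v) = 2 * v / (1 + v ^ 2) := by
  have hs : √(1 + v ^ 2) ^ 2 = 1 + v ^ 2 := sq_sqrt (by positivity)
  rw [sin_two_mul, sin_arctan, cos_arctan]
  field_simp
  rw [hs]

theorem cos_two_mul_arctan (v : ℝ) : cos (2 * arctan v) = (1 - v ^ 2) / (1 + v ^ 2) := by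
  rw [cos_two_mul, cos_sq_arctan]
  field_simp
  ring

theorem sin_two_mul_Qfun (k : ℕ) (s : ℝ) :
    sin (2 * Qfun k s) = 4 * s ^ k * (1 - (s ^ k) ^ 2) / (1 + (s ^ k) ^ 2) ^ 2 := by
  rw [Qfun, sin_two_mul, sin_two_mul_arctan, cos_two_mul_arctan]
  field_simp
  ring

theorem cos_two_mul_Qfun (k : ℕ) (s : ℝ) :
    cos (2 * Qfun k s) = ((1 + (s ^ k) ^ 2) ^ 2 - 8 * (s ^ k) ^ 2) / (1 + (s ^ k) ^ 2) ^ 2 := by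
  rw [Qfun, cos_two_mul, cos_two_mul_arctan]
  field_simp
  ring

def interactionKernel (x y : ℝ) : ℝ :=
  x * (x ^ 3 * y * (3 + y ^ 2) + 1 + 3 * x ^ 2) / ((1 + x ^ 2) ^ 2 * (1 + y ^ 2) ^ 2)

theorem Gfun_eq_interactionKernel (k : ℕ) {lam mu r : ℝ} (hl : lam ≠ 0) (hm : mu ≠ 0)
    (hr : r ≠ 0) :
    Gfun k lam mu r =
      -(16 * k ^ 2 * (lam / mu) ^ (2 * k) * interactionKernel ((r / lam) ^ k) ((r / mu) ^ k)) := by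
  have hy : (r / mu) ^ k = (lam / mu) ^ k * (r / lam) ^ k := by
    rw [← mul_pow]; congr 1; field_simp
  have hx : (r / lam) ^ k ≠ 0 := by positivity
  unfold Gfun fNL LamQ interactionKernel
  rw [mul_sub, sin_sub, sin_two_mul_Qfun, cos_two_mul_Qfun, sin_two_mul_Qfun, cos_two_mul_Qfun,
    zpow_neg, zpow_natCast, pow_mul', pow_mul', hy]
  field_simp
  ring

theorem interactionKernel_nonneg {x y : ℝ} (hx : 0 ≤ x) (hy : 0 ≤ y) :
    0 ≤ interactionKernel x y := by
  unfold interactionKernel; positivity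

theorem interactionKernel_le {x y : ℝ} (hx : 0 ≤ x) (hy : 0 ≤ y) :
    interactionKernel x y ≤ 3 * (x / (1 + x ^ 2)) + 4 * (y / (1 + y ^ 2)) := by
  have ha : x + 3 * x ^ 3 ≤ 3 * x * (1 + x ^ 2) * (1 + y ^ 2) ^ 2 := by
    nlinarith [mul_nonneg hx (sq_nonneg y), mul_nonneg (mul_nonneg hx (sq_nonneg y)) (sq_nonneg y),
      mul_nonneg (mul_nonneg (mul_nonneg hx (sq_nonneg x)) (sq_nonneg y)) (sq_nonneg y),
      mul_nonneg (mul_nonneg hx (sq_nonneg x)) (sq_nonneg y)]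
  have hb : 3 * x ^ 4 * y + x ^ 4 * y ^ 3 ≤ 4 * y * (1 + x ^ 2) ^ 2 * (1 + y ^ 2) := by
    nlinarith [mul_nonneg hy (sq_nonneg (1 - x ^ 2)),
      mul_nonneg (mul_nonneg hy (sq_nonneg (1 - x ^ 2))) (sq_nonneg y),
      mul_nonneg (mul_nonneg hy (sq_nonneg x)) (sq_nonneg y), mul_nonneg hy (sq_nonneg x),
      mul_nonneg (mul_nonneg hy (sq_nonneg x)) (sq_nonneg x)]
  have hrhs : 3 * (x / (1 + x ^ 2)) + 4 * (y / (1 + y ^ 2)) =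
      (3 * x * (1 + x ^ 2) * (1 + y ^ 2) ^ 2 + 4 * y * (1 + x ^ 2) ^ 2 * (1 + y ^ 2)) /
        ((1 + x ^ 2) ^ 2 * (1 + y ^ 2) ^ 2) := by
    field_simp
  rw [interactionKernel, hrhs]
  gcongr
  nlinarith [ha, hb]

theorem abs_Gfun_le (k : ℕ) {lam mu r : ℝ} (hl : 0 < lam) (hm : 0 < mu) (hr : 0 < r) :
    |Gfun k lam mu r| ≤
      8 * k * (lam / mu) ^ (2 * k) * (3 * LamQ k (r / lam) + 4 * LamQ k (r / mu)) := by
  have hx : 0 ≤ (r / lam) ^ k := by positivity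
  have hy : 0 ≤ (r / mu) ^ k := by positivity
  have hLamQ (s : ℝ) : LamQ k s = 2 * k * (s ^ k / (1 + (s ^ k) ^ 2)) := by
    rw [LamQ, pow_mul']; ring
  have hK := interactionKernel_nonneg hx hy
  rw [Gfun_eq_interactionKernel k hl.ne' hm.ne' hr.ne', abs_neg, abs_of_nonneg (by positivity),
    hLamQ, hLamQ]
  calc 16 * (k : ℝ) ^ 2 * (lam / mu) ^ (2 * k) * interactionKernel ((r / lam) ^ k) ((r / mu) ^ k)
      ≤ 16 * (k : ℝ) ^ 2 * (lam / mu) ^ (2 * k) *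
          (3 * ((r / lam) ^ k / (1 + ((r / lam) ^ k) ^ 2)) +
            4 * ((r / mu) ^ k / (1 + ((r / mu) ^ k) ^ 2))) := by
        gcongr
        exact interactionKernel_le hx hy
    _ = _ := by ring

theorem Gfun_sq_le (k : ℕ) {lam mu r : ℝ} (hl : 0 < lam) (hm : 0 < mu) (hr : 0 < r) :
    Gfun k lam mu r ^ 2 ≤
      64 * k ^ 2 * ((lam / mu) ^ (2 * k)) ^ 2 *
        (18 * LamQ k (r / lam) ^ 2 + 32 * LamQ k (r / mu) ^ 2) := by
  have hG := abs_Gfun_le k hl hm hr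
  have hG0 := (abs_nonneg _).trans hG
  set a := LamQ k (r / lam)
  set b := LamQ k (r / mu)
  calc Gfun k lam mu r ^ 2 = |Gfun k lam mu r| ^ 2 := (sq_abs _).symm
    _ ≤ (8 * k * (lam / mu) ^ (2 * k) * (3 * a + 4 * b)) ^ 2 := by gcongr
    _ ≤ _ := by
        nlinarith [mul_nonneg (by positivity : (0 : ℝ) ≤ 64 * k ^ 2 * ((lam / mu) ^ (2 * k)) ^ 2)
          (sq_nonneg (3 * a - 4 * b))]

theorem comp_div_div_pow_mul_eq (g : ℝ → ℝ) (n : ℕ) {c : ℝ} (hc : c ≠ 0) (r : ℝ) :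
    g (r / c) / r ^ n * r = c ^ (1 - (n : ℤ)) * (g (c⁻¹ * r) / (c⁻¹ * r) ^ n * (c⁻¹ * r)) := by
  rcases eq_or_ne r 0 with rfl | hr
  · simp
  rw [inv_mul_eq_div, div_pow, zpow_sub₀ hc, zpow_one, zpow_natCast]
  field_simp

theorem integral_Ioi_comp_div_div_pow_mul (g : ℝ → ℝ) (n : ℕ) {c : ℝ} (hc : 0 < c) :
    ∫ r in Ioi (0 : ℝ), g (r / c) / r ^ n * r =
      c ^ (2 - (n : ℤ)) * ∫ s in Ioi (0 : ℝ), g s / s ^ n * s := by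
  simp_rw [comp_div_div_pow_mul_eq g n hc.ne']
  rw [integral_const_mul, integral_comp_mul_left_Ioi (fun s => g s / s ^ n * s) 0 (inv_pos.2 hc),
    mul_zero, inv_inv, smul_eq_mul, ← mul_assoc, ← zpow_add_one₀ hc.ne']
  ring_nf

theorem integrableOn_Ioi_comp_div_div_pow_mul {g : ℝ → ℝ} {n : ℕ}
    (hg : IntegrableOn (fun s => g s / s ^ n * s) (Ioi 0)) {c : ℝ} (hc : 0 < c) :
    IntegrableOn (fun r => g (r / c) / r ^ n * r) (Ioi 0) := by
  simp_rw [comp_div_div_pow_mul_eq g n hc.ne']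
  refine Integrable.const_mul ?_ _
  rw [← mul_zero c⁻¹] at hg
  exact (integrableOn_Ioi_comp_mul_left_iff (fun s => g s / s ^ n * s) 0 (inv_pos.2 hc)).2 hg

theorem integrableOn_LamQ_sq_div_pow_mul {k α : ℕ} (hα : 1 ≤ α) (hαk : α ≤ k) :
    IntegrableOn (fun s => LamQ k s ^ 2 / s ^ (2 * α) * s) (Ioi 0) := by
  obtain ⟨m, hm_eq, hm_le⟩ : ∃ m : ℕ, 2 * k + 1 = m + 2 * α ∧ m + 3 ≤ k * 2 * 2 :=
    ⟨2 * (k - α) + 1, by omega, by omega⟩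
  let h : ℝ → ℝ := fun s => (2 * k) ^ 2 * s ^ m / (1 + (s ^ k) ^ 2) ^ 2
  have h_cont : Continuous h := by
    refine Continuous.div (by fun_prop) (by fun_prop) fun s => ?_
    positivity
  have h_Ioi_one : IntegrableOn h (Ioi 1) := by
    refine ((integrableOn_Ioi_rpow_of_lt (by norm_num : (-3 : ℝ) < -1) one_pos).const_mul
      ((2 * k) ^ 2)).mono' h_cont.aestronglyMeasurable.restrict ?_
    filter_upwards [ae_restrict_mem measurableSet_Ioi] with s (hs : 1 < s)
    have hs0 : 0 < s := one_pos.trans hs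
    rw [Real.norm_of_nonneg (by positivity)]
    calc h s = (2 * k) ^ 2 * s ^ m / (1 + (s ^ k) ^ 2) ^ 2 := rfl
      _ ≤ (2 * k) ^ 2 * s ^ m / s ^ (m + 3) := by
          gcongr
          calc s ^ (m + 3) ≤ s ^ (k * 2 * 2) := pow_le_pow_right₀ hs.le hm_le
            _ ≤ (1 + (s ^ k) ^ 2) ^ 2 := by rw [pow_mul, pow_mul]; gcongr; linarith
      _ = (2 * k) ^ 2 * s ^ (-3 : ℝ) := by
          rw [pow_add, rpow_neg hs0.le, rpow_ofNat]
          field_simp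
  have h_Ioi_zero : IntegrableOn h (Ioi 0) := by
    rw [← Ioc_union_Ioi_eq_Ioi zero_le_one]
    exact (h_cont.integrableOn_Icc.mono_set Ioc_subset_Icc_self).union h_Ioi_one
  refine h_Ioi_zero.congr_fun (fun s (hs : 0 < s) => ?_) measurableSet_Ioi
  have hpow : s ^ m * s ^ (2 * α) = s ^ (2 * k) * s := by rw [← pow_add, ← hm_eq, pow_succ]
  simp only [h, LamQ, pow_mul']
  field_simp
  linear_combination (k : ℝ) ^ 2 * hpow

theorem zpow_le_zpow_left_of_nonpos {K : Type*} [Field K] [LinearOrder K] [IsStrictOrderedRing K]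
    {a b : K} {n : ℤ} (ha : 0 < a) (hab : a ≤ b) (hn : n ≤ 0) : b ^ n ≤ a ^ n := by
  obtain ⟨m, rfl⟩ := Int.exists_eq_neg_ofNat hn
  rw [zpow_neg, zpow_neg, zpow_natCast, zpow_natCast]
  exact inv_anti₀ (pow_pos ha _) (pow_le_pow_left₀ ha.le hab _)

theorem integral_Gfun_sq_div_pow_mul_le {k α : ℕ} (hα : 1 ≤ α) (hαk : α ≤ k) {lam mu : ℝ}
    (hl : 0 < lam) (hlm : lam ≤ mu) :
    ∫ r in Ioi (0 : ℝ), Gfun k lam mu r ^ 2 / r ^ (2 * α) * r ≤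
      3200 * k ^ 2 * (∫ s in Ioi (0 : ℝ), LamQ k s ^ 2 / s ^ (2 * α) * s) *
        ((lam / mu) ^ (2 * k) * lam ^ (1 - (α : ℤ))) ^ 2 := by
  have hm := hl.trans_le hlm
  set I := ∫ s in Ioi (0 : ℝ), LamQ k s ^ 2 / s ^ (2 * α) * s
  set A : ℝ := 64 * k ^ 2 * ((lam / mu) ^ (2 * k)) ^ 2
  have hint := integrableOn_LamQ_sq_div_pow_mul hα hαk
  have hint_lam := integrableOn_Ioi_comp_div_div_pow_mul hint hl
  have hint_mu := integrableOn_Ioi_comp_div_div_pow_mul hint hm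
  have hpow_anti : mu ^ (2 - ((2 * α : ℕ) : ℤ)) ≤ lam ^ (2 - ((2 * α : ℕ) : ℤ)) :=
    zpow_le_zpow_left_of_nonpos hl hlm (by omega)
  have hsq : lam ^ (2 - ((2 * α : ℕ) : ℤ)) = (lam ^ (1 - (α : ℤ))) ^ 2 := by
    rw [← zpow_natCast (lam ^ _), ← zpow_mul]
    push_cast
    ring_nf
  calc ∫ r in Ioi (0 : ℝ), Gfun k lam mu r ^ 2 / r ^ (2 * α) * r
      ≤ ∫ r in Ioi (0 : ℝ), A * 18 * (LamQ k (r / lam) ^ 2 / r ^ (2 * α) * r) +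
          A * 32 * (LamQ k (r / mu) ^ 2 / r ^ (2 * α) * r) := by
        refine integral_mono_of_nonneg ?_ ((hint_lam.const_mul _).add (hint_mu.const_mul _)) ?_
        · filter_upwards [ae_restrict_mem measurableSet_Ioi] with r (hr : 0 < r)
          positivity
        · filter_upwards [ae_restrict_mem measurableSet_Ioi] with r (hr : 0 < r)
          calc Gfun k lam mu r ^ 2 / r ^ (2 * α) * r
              ≤ A * (18 * LamQ k (r / lam) ^ 2 + 32 * LamQ k (r / mu) ^ 2) / r ^ (2 * α) * r := by
                gcongr
                exact Gfun_sq_le k hl hm hr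
            _ = _ := by ring
    _ = A * 18 * (lam ^ (2 - ((2 * α : ℕ) : ℤ)) * I) +
          A * 32 * (mu ^ (2 - ((2 * α : ℕ) : ℤ)) * I) := by
        rw [integral_add (hint_lam.const_mul _) (hint_mu.const_mul _), integral_const_mul,
          integral_const_mul, integral_Ioi_comp_div_div_pow_mul (fun s => LamQ k s ^ 2) _ hl,
          integral_Ioi_comp_div_div_pow_mul (fun s => LamQ k s ^ 2) _ hm]
    _ ≤ A * 50 * (lam ^ (2 - ((2 * α : ℕ) : ℤ)) * I) := by
        have hI : 0 ≤ I := setIntegral_nonneg measurableSet_Ioi fun s (hs : 0 < s) => by positivity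
        have hA : 0 ≤ A := by positivity
        nlinarith [mul_le_mul_of_nonneg_left (mul_le_mul_of_nonneg_right hpow_anti hI) hA]
    _ = _ := by rw [hsq]; ring

/-- `‖r^{-α} G_{λ,μ}‖_{L²} ≤ C ν^{2k} λ^{1-α}` for `α ∈ {1,2,3}`. -/
theorem stmt5 (k : ℕ) (hk : 4 ≤ k) :
    ∀ α : ℕ, α ∈ ({1, 2, 3} : Set ℕ) →
      ∃ C : ℝ, 0 < C ∧
        ∀ lam mu : ℝ, 0 < lam → 0 < mu → lam / mu ≤ 1 / 2 →
          Real.sqrt (∫ r in Ioi (0 : ℝ), Gfun k lam mu r ^ 2 / r ^ (2 * α) * r)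
            ≤ C * (lam / mu) ^ (2 * k) * lam ^ (1 - (α : ℤ)) := by
  intro α hα
  have hα1 : 1 ≤ α := by rcases hα with rfl | rfl | rfl <;> norm_num
  have hαk : α ≤ k := by rcases hα with rfl | rfl | rfl <;> omega
  set I := ∫ s in Ioi (0 : ℝ), LamQ k s ^ 2 / s ^ (2 * α) * s
  refine ⟨√(3200 * k ^ 2 * I) + 1, by positivity, fun lam mu hl hm hν => ?_⟩
  have hlm : lam ≤ mu := by rw [div_le_iff₀ hm] at hν; linarith
  set B := (lam / mu) ^ (2 * k) * lam ^ (1 - (α : ℤ))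
  have hB : 0 ≤ B := by positivity
  calc √(∫ r in Ioi (0 : ℝ), Gfun k lam mu r ^ 2 / r ^ (2 * α) * r)
      ≤ √(3200 * k ^ 2 * I * B ^ 2) := sqrt_le_sqrt (integral_Gfun_sq_div_pow_mul_le hα1 hαk hl hlm)
    _ = √(3200 * k ^ 2 * I) * B := by rw [sqrt_mul' _ (sq_nonneg B), sqrt_sq hB]
    _ ≤ (√(3200 * k ^ 2 * I) + 1) * B := by gcongr; linarith
    _ = (√(3200 * k ^ 2 * I) + 1) * (lam / mu) ^ (2 * k) * lam ^ (1 - (α : ℤ)) := by ring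

end
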